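/- Let A be a d×d matrix over ℝ ∪ {-∞} whose graph is strongly connected, with ρ_max(A) = 0. Then the sequence of (max,+) powers (A^{⊗n})_{n∈ℕ} is ultimately periodic: there exist n₀ and c ≥ 1 such that A^{⊗(n+c)} = A^{⊗n} for all n ≥ n₀. -/

import Mathlib

/-- The `(max,+)` matrix product over the semiring `(ℝ ∪ {-∞}, max, +)`. -/
def mpMul {d : ℕ} (A B : Fin d → Fin d → WithBot ℝ) : Fin d → Fin d → WithBot ℝ :=
  fun i j => Finset.univ.sup (fun p => A i p + B p j)

/-- The `n`-th `(max,+)` power of a matrix. -/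
def mpPow {d : ℕ} (A : Fin d → Fin d → WithBot ℝ) : ℕ → Fin d → Fin d → WithBot ℝ
  | 0 => fun i j => if i = j then (0 : WithBot ℝ) else ⊥
  | n + 1 => mpMul A (mpPow A n)

/-- `p : Fin (c+1) → Fin d` is an elementary circuit of the graph of `A`. -/
def IsElemCircuit {d : ℕ} (A : Fin d → Fin d → WithBot ℝ) (c : ℕ)
    (p : Fin (c + 1) → Fin d) : Prop :=
  0 < c ∧ p 0 = p (Fin.last c) ∧
  (∀ k : Fin c, A (p k.castSucc) (p k.succ) ≠ ⊥) ∧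
  Function.Injective (fun k : Fin c => p k.castSucc)

/-- The set of average weights of elementary circuits of `A`; `ρ_max(A)` is its
supremum. -/
def circuitAvgWeights {d : ℕ} (A : Fin d → Fin d → WithBot ℝ) : Set ℝ :=
  {r : ℝ | ∃ (c : ℕ) (p : Fin (c + 1) → Fin d), IsElemCircuit A c p ∧
    r = (∑ k : Fin c, (A (p k.castSucc) (p k.succ)).unbotD 0) / c}

/-!
Circuits have nonpositive weight, so an optimal walk of length `n` from `i` to `j` splits into
a path `q` of length `< d` and a bag of elementary circuits: `A^{⊗n}_{ij} = w(q) + s` with `s`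
in the additive monoid generated by the finitely many, nonpositive, circuit weights. Strong
connectivity, a circuit of weight `0` and Schur's theorem on numerical semigroups give, for
every large total length `ℓ` of circuits, a closed walk at `j` of length `ℓ` and weight at least
some constant `-K`. Hence `A^{⊗n}_{ij} ≥ w(q) - K`, i.e. `s ≥ -K`, so `s` ranges over a finite
set. From some `n` on, the entries of `A^{⊗n}` therefore take finitely many values, and since
`A^{⊗(n+1)} = A ⊗ A^{⊗n}`, pigeonhole makes the sequence ultimately periodic.
-/

open Finset

theorem exists_lowerBound_of_superadditive {f : ℕ → WithBot ℝ}
    (hf : ∀ a b, f a + f b ≤ f (a + b)) (h0 : 0 ≤ f 0) {g : ℕ} (hg : 0 < g) (hfg : 0 ≤ f g) :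
    ∃ (K : ℝ) (N : ℕ), ∀ n ≥ N, f n ≠ ⊥ → (K : WithBot ℝ) ≤ f n := by
  have hmul (k : ℕ) : 0 ≤ f (g * k) := by
    induction k with
    | zero => simpa using h0
    | succ k ih => rw [Nat.mul_succ]; simpa using (add_le_add ih hfg).trans (hf _ _)
  -- Each residue class mod `g` meeting `{n | f n ≠ ⊥}` gets a representative `a r`; every
  -- later member of the class is `a r + g * k`, so `f` is at least `f (a r)` there.
  have hrep (r : ℕ) : ∃ a, f a ≠ ⊥ ∧ ((∃ n, f n ≠ ⊥ ∧ n % g = r) → a % g = r) := by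
    by_cases h : ∃ n, f n ≠ ⊥ ∧ n % g = r
    · obtain ⟨n, hn, hnr⟩ := h
      exact ⟨n, hn, fun _ => hnr⟩
    · exact ⟨0, ne_bot_of_le_ne_bot WithBot.coe_ne_bot h0, fun h' => absurd h' h⟩
  choose a ha hamod using hrep
  refine ⟨(range g).inf' (nonempty_range_iff.2 hg.ne') fun r => (f (a r)).unbotD 0,
    (range g).sup a, fun n hn hfn => ?_⟩
  have hr : n % g ∈ range g := mem_range.2 (Nat.mod_lt n hg)
  have han : a (n % g) ≤ n := (le_sup hr).trans hn
  obtain ⟨k, hk⟩ := (Nat.modEq_iff_dvd' han).1 (hamod _ ⟨n, hfn, rfl⟩)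
  calc _ ≤ f (a (n % g)) := (WithBot.le_unbotD_iff (ha _)).1 (inf'_le _ hr)
    _ ≤ f (a (n % g)) + f (g * k) := le_add_of_nonneg_right (hmul k)
    _ ≤ f (a (n % g) + g * k) := hf _ _
    _ = f n := by rw [← hk, Nat.add_sub_cancel' han]

theorem finite_closure_singleton_inter_Ici {w : ℝ} (hw : w ≤ 0) (c : ℝ) :
    ((AddSubmonoid.closure {w} : Set ℝ) ∩ Set.Ici c).Finite := by
  rcases hw.lt_or_eq with hw | rfl
  · refine ((Set.finite_Iic ⌊c / w⌋₊).image (· • w)).subset ?_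
    rintro _ ⟨hy, hc⟩
    obtain ⟨n, rfl⟩ := AddSubmonoid.mem_closure_singleton.1 hy
    refine ⟨n, Nat.le_floor ?_, rfl⟩
    rw [le_div_iff_of_neg hw]
    simpa [nsmul_eq_mul] using hc
  · simpa [AddSubmonoid.closure_singleton_zero] using
      (Set.finite_singleton (0 : ℝ)).inter_of_left (Set.Ici c)

theorem finite_closure_inter_Ici {W : Set ℝ} (hW : W.Finite) (hW0 : ∀ w ∈ W, w ≤ 0) (c : ℝ) :
    ((AddSubmonoid.closure W : Set ℝ) ∩ Set.Ici c).Finite := by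
  induction W, hW using Set.Finite.induction_on with
  | empty => simpa using (Set.finite_singleton (0 : ℝ)).inter_of_left (Set.Ici c)
  | @insert w W _ _ ih =>
    have hw : w ≤ 0 := hW0 w (Set.mem_insert w W)
    have hW0' : ∀ v ∈ W, v ≤ 0 := fun v hv => hW0 v (Set.mem_insert_of_mem w hv)
    refine ((finite_closure_singleton_inter_Ici hw c).image2 (· + ·) (ih hW0')).subset ?_
    rintro _ ⟨hmem, hc⟩
    rw [Set.insert_eq, AddSubmonoid.closure_union] at hmem
    obtain ⟨y, hy, x, hx, rfl⟩ := AddSubmonoid.mem_sup.1 hmem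
    have hy0 : y ≤ 0 := by
      obtain ⟨n, rfl⟩ := AddSubmonoid.mem_closure_singleton.1 hy
      exact nsmul_nonpos hw n
    have hx0 : x ≤ 0 := AddSubmonoid.closure_induction hW0' le_rfl
      (fun _ _ _ _ => add_nonpos) hx
    rw [Set.mem_Ici] at hc
    exact ⟨y, ⟨hy, show c ≤ y by linarith⟩, x, ⟨hx, show c ≤ x by linarith⟩, rfl⟩

theorem lt_card_of_injOn_Iic {α : Type*} [Fintype α] {q : ℕ → α} {m : ℕ}
    (h : Set.InjOn q (Set.Iic m)) : m < Fintype.card α := by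
  simpa using card_le_card_of_injOn q (s := range (m + 1)) (fun _ _ => mem_univ _)
    (h.mono fun k hk => Nat.lt_succ_iff.1 (mem_range.1 (mem_coe.1 hk)))

theorem Set.InjOn.comp_add_right_Iic {α : Type*} {q : ℕ → α} {m t : ℕ}
    (h : Set.InjOn q (Set.Iic m)) (htm : t ≤ m) :
    Set.InjOn (fun k => q (k + t)) (Set.Iic (m - t)) :=
  fun k hk k' hk' hkk' => Nat.add_right_cancel <|
    h (by simp only [Set.mem_Iic] at hk ⊢; omega) (by simp only [Set.mem_Iic] at hk' ⊢; omega) hkk'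

theorem Function.exists_iterate_add_eq_of_eventually_mem {α : Type*} {f : α → α} {x : α}
    {s : Set α} (hs : s.Finite) (h : ∀ᶠ n in Filter.atTop, f^[n] x ∈ s) :
    ∃ n₀ c, 1 ≤ c ∧ ∀ n, n₀ ≤ n → f^[n + c] x = f^[n] x := by
  obtain ⟨N, hN⟩ := Filter.eventually_atTop.1 h
  obtain ⟨a, b, hab, heq⟩ := hs.exists_lt_map_eq_of_forall_mem
    (f := fun k => f^[k + N] x) fun k => hN _ (Nat.le_add_left N k)
  refine ⟨a + N, b - a, by omega, fun n hn => ?_⟩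
  obtain ⟨k, rfl⟩ := Nat.exists_eq_add_of_le hn
  calc f^[a + N + k + (b - a)] x = f^[k] (f^[b + N] x) := by
        rw [← iterate_add_apply]; congr 1; omega
    _ = f^[a + N + k] x := by
        rw [← heq, ← iterate_add_apply]; congr 1; omega

section Powers

variable {d : ℕ} {A : Fin d → Fin d → WithBot ℝ}

theorem mpPow_eq_iterate (n : ℕ) : mpPow A n = (mpMul A)^[n] (mpPow A 0) := by
  induction n with
  | zero => rfl
  | succ n ih => rw [Function.iterate_succ_apply', ← ih]; rfl

theorem mpPow_add_le (m n : ℕ) (i k j : Fin d) :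
    mpPow A m i k + mpPow A n k j ≤ mpPow A (m + n) i j := by
  induction m generalizing i with
  | zero => by_cases hik : i = k <;> simp [mpPow, hik]
  | succ m ih =>
    rw [Nat.succ_add, mpPow, mpPow, mpMul, mpMul,
      apply_sup_eq_sup_comp_of_linearOrder (· + mpPow A n k j)
        (fun _ _ h => add_le_add_left h _) (WithBot.bot_add _)]
    exact sup_mono_fun fun q _ => by
      simpa only [Function.comp_apply, add_assoc] using add_le_add_right (ih q) _

theorem mpPow_add_ne_bot {m n : ℕ} {i k j : Fin d} (h₁ : mpPow A m i k ≠ ⊥)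
    (h₂ : mpPow A n k j ≠ ⊥) : mpPow A (m + n) i j ≠ ⊥ :=
  ne_bot_of_le_ne_bot (WithBot.add_ne_bot.2 ⟨h₁, h₂⟩) (mpPow_add_le m n i k j)

variable (A) in
def closedWalkLengths (z : Fin d) : AddSubmonoid ℕ where
  carrier := {n | mpPow A n z z ≠ ⊥}
  zero_mem' := by simp [mpPow]
  add_mem' := mpPow_add_ne_bot

end Powers

section Walks

variable {d : ℕ} (A : Fin d → Fin d → WithBot ℝ)

def walkWeight (n : ℕ) (p : ℕ → Fin d) : WithBot ℝ :=
  ∑ k ∈ range n, A (p k) (p (k + 1))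

def consWalk (i : Fin d) (p : ℕ → Fin d) : ℕ → Fin d
  | 0 => i
  | k + 1 => p k

variable {A}

@[simp] theorem consWalk_zero (i : Fin d) (p : ℕ → Fin d) : consWalk i p 0 = i := rfl

@[simp] theorem consWalk_succ (i : Fin d) (p : ℕ → Fin d) (k : ℕ) :
    consWalk i p (k + 1) = p k := rfl

@[simp] theorem walkWeight_zero (p : ℕ → Fin d) : walkWeight A 0 p = 0 := rfl

theorem walkWeight_succ (n : ℕ) (p : ℕ → Fin d) :
    walkWeight A (n + 1) p = A (p 0) (p 1) + walkWeight A n (fun k => p (k + 1)) := by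
  rw [walkWeight, sum_range_succ', add_comm]
  rfl

theorem walkWeight_add (m n : ℕ) (p : ℕ → Fin d) :
    walkWeight A (m + n) p = walkWeight A m p + walkWeight A n (fun k => p (k + m)) := by
  rw [walkWeight, sum_range_add]
  simp only [walkWeight, add_comm m, Nat.add_right_comm _ 1 m]

theorem finite_range_walkWeight (n : ℕ) : (Set.range (walkWeight A n)).Finite :=
  (Set.finite_range fun f : Fin n → Fin d × Fin d => ∑ k, A (f k).1 (f k).2).subset <| by
    rintro _ ⟨p, rfl⟩
    exact ⟨fun k => (p k, p (k + 1)), (sum_range fun k => A (p k) (p (k + 1))).symm⟩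

theorem walkWeight_le_mpPow (n : ℕ) (p : ℕ → Fin d) :
    walkWeight A n p ≤ mpPow A n (p 0) (p n) := by
  induction n generalizing p with
  | zero => simp [mpPow]
  | succ n ih =>
    rw [walkWeight_succ]
    calc A (p 0) (p 1) + walkWeight A n (fun k => p (k + 1))
        ≤ A (p 0) (p 1) + mpPow A n (p 1) (p (n + 1)) := by gcongr; exact ih _
      _ ≤ mpPow A (n + 1) (p 0) (p (n + 1)) :=
        le_sup (f := fun q => A (p 0) q + mpPow A n q (p (n + 1))) (mem_univ _)

theorem exists_walkWeight_eq_mpPow {n : ℕ} {i j : Fin d} (h : mpPow A n i j ≠ ⊥) :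
    ∃ p, p 0 = i ∧ p n = j ∧ walkWeight A n p = mpPow A n i j := by
  induction n generalizing i with
  | zero =>
    have hij : i = j := by by_contra hij; simp [mpPow, hij] at h
    exact ⟨fun _ => i, rfl, hij, by simp [mpPow, hij]⟩
  | succ n ih =>
    obtain ⟨q, -, hq⟩ := exists_mem_eq_sup univ ⟨i, mem_univ i⟩
      fun q => A i q + mpPow A n q j
    change mpMul A (mpPow A n) i j ≠ ⊥ at h
    rw [mpMul, hq, WithBot.add_ne_bot] at h
    obtain ⟨p, hp0, hpn, hp⟩ := ih h.2
    refine ⟨consWalk i p, rfl, hpn, ?_⟩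
    rw [walkWeight_succ, mpPow, mpMul, hq]
    simp [hp0, hp]

theorem injOn_consWalk {i : Fin d} {p : ℕ → Fin d} {m : ℕ} (hp : Set.InjOn p (Set.Iio m))
    (hi : ∀ k < m, p k ≠ i) : Set.InjOn (consWalk i p) (Set.Iio (m + 1)) := by
  rintro (_ | k) hk (_ | k') hk' h
  · rfl
  · exact absurd h.symm (hi k' (Nat.succ_lt_succ_iff.1 hk'))
  · exact absurd h (hi k (Nat.succ_lt_succ_iff.1 hk))
  · exact congrArg (· + 1) (hp (Nat.succ_lt_succ_iff.1 hk) (Nat.succ_lt_succ_iff.1 hk') h)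

end Walks

section Circuits

variable {d : ℕ} (A : Fin d → Fin d → WithBot ℝ)

def circuitWeight (c : ℕ) (q : Fin (c + 1) → Fin d) : ℝ :=
  ∑ k : Fin c, (A (q k.castSucc) (q k.succ)).unbotD 0

def circuitLengths : Set ℕ := {c | ∃ q, IsElemCircuit A c q}

def circuitWeights : Set ℝ := {w | ∃ c q, IsElemCircuit A c q ∧ w = circuitWeight A c q}

variable {A} {c : ℕ} {q : Fin (c + 1) → Fin d}

theorem IsElemCircuit.length_le (h : IsElemCircuit A c q) : c ≤ d := by
  simpa using Fintype.card_le_of_injective _ h.2.2.2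

theorem finite_setOf_isElemCircuit {β : Type*} (f : (c : ℕ) → (Fin (c + 1) → Fin d) → β) :
    {x | ∃ c q, IsElemCircuit A c q ∧ x = f c q}.Finite :=
  ((Set.finite_Iic d).biUnion fun c _ => Set.finite_range (f c)).subset <| by
    rintro _ ⟨c, q, hq, rfl⟩
    exact Set.mem_biUnion hq.length_le ⟨q, rfl⟩

theorem finite_circuitAvgWeights : (circuitAvgWeights A).Finite :=
  finite_setOf_isElemCircuit fun c q => circuitWeight A c q / c

theorem IsElemCircuit.coe_circuitWeight (h : IsElemCircuit A c q) :
    (circuitWeight A c q : WithBot ℝ) = ∑ k : Fin c, A (q k.castSucc) (q k.succ) := by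
  rw [circuitWeight, WithBot.coe_sum]
  refine sum_congr rfl fun k _ => ?_
  obtain ⟨x, hx⟩ := WithBot.ne_bot_iff_exists.1 (h.2.2.1 k)
  rw [← hx]
  rfl

theorem IsElemCircuit.circuitWeight_le_mpPow (h : IsElemCircuit A c q) :
    (circuitWeight A c q : WithBot ℝ) ≤ mpPow A c (q 0) (q 0) := by
  have hweight : walkWeight A c (fun k => q (Fin.clamp k c)) = circuitWeight A c q := by
    rw [h.coe_circuitWeight, walkWeight, sum_range]
    congr! with k
    · exact Fin.ext (min_eq_left k.2.le)
    · exact Fin.ext (min_eq_left k.2)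
  have hstart : Fin.clamp 0 c = 0 := Fin.ext (Nat.zero_min c)
  have hend : q (Fin.clamp c c) = q 0 := by
    rw [h.2.1]
    exact congrArg q (Fin.ext (min_self c))
  simpa [hweight, hstart, hend] using walkWeight_le_mpPow (A := A) c fun k => q (Fin.clamp k c)

theorem circuitWeight_nonpos (hρ : sSup (circuitAvgWeights A) = 0) (hq : IsElemCircuit A c q) :
    circuitWeight A c q ≤ 0 := by
  have hmem : circuitWeight A c q / c ∈ circuitAvgWeights A := ⟨c, q, hq, rfl⟩
  have hle : circuitWeight A c q / c ≤ 0 :=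
    hρ ▸ le_csSup finite_circuitAvgWeights.bddAbove hmem
  simpa using (div_le_iff₀ (Nat.cast_pos.2 hq.1)).1 hle

theorem isElemCircuit_of_walkWeight_ne_bot {p : ℕ → Fin d} (hc : 0 < c) (hp : p 0 = p c)
    (hinj : Set.InjOn p (Set.Iio c)) (hw : walkWeight A c p ≠ ⊥) :
    IsElemCircuit A c (fun k => p k) ∧ walkWeight A c p = circuitWeight A c (fun k => p k) := by
  have harc (k : ℕ) (hk : k < c) : A (p k) (p (k + 1)) ≠ ⊥ := fun hbot =>
    hw (WithBot.sum_eq_bot_iff.2 ⟨k, mem_range.2 hk, hbot⟩)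
  have hcirc : IsElemCircuit A c (fun k => p k) :=
    ⟨hc, by simpa using hp, fun k => harc k k.2, fun k k' h => Fin.ext (hinj k.2 k'.2 h)⟩
  refine ⟨hcirc, ?_⟩
  rw [hcirc.coe_circuitWeight, walkWeight, sum_range]
  rfl

theorem walkWeight_consWalk_eq_circuitWeight_add {i : Fin d} {p : ℕ → Fin d} {m t : ℕ}
    (hinj : Set.InjOn p (Set.Iic m)) (htm : t ≤ m) (ht : p t = i)
    (hw : walkWeight A (m + 1) (consWalk i p) ≠ ⊥) :
    IsElemCircuit A (t + 1) (fun k => consWalk i p k) ∧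
      walkWeight A (m + 1) (consWalk i p) =
        circuitWeight A (t + 1) (fun k => consWalk i p k) +
          walkWeight A (m - t) (fun k => p (k + t)) := by
  have hsplit : walkWeight A (m + 1) (consWalk i p) =
      walkWeight A (t + 1) (consWalk i p) + walkWeight A (m - t) (fun k => p (k + t)) := by
    rw [show m + 1 = t + 1 + (m - t) by omega, walkWeight_add]
    rfl
  rw [hsplit, WithBot.add_ne_bot] at hw
  obtain ⟨hcirc, hcw⟩ := isElemCircuit_of_walkWeight_ne_bot t.succ_pos ht.symm
    (injOn_consWalk (hinj.mono fun k hk => (Set.mem_Iio.1 hk).le.trans htm)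
      fun k hk hki => hk.ne (hinj (hk.le.trans htm) htm (hki.trans ht.symm))) hw.1
  exact ⟨hcirc, by rw [hsplit, hcw]⟩

theorem exists_path_add_circuits (n : ℕ) (p : ℕ → Fin d) (hp : walkWeight A n p ≠ ⊥) :
    ∃ m q, q 0 = p 0 ∧ q m = p n ∧ Set.InjOn q (Set.Iic m) ∧
      ∃ ℓ ∈ AddSubmonoid.closure (circuitLengths A),
        ∃ s ∈ AddSubmonoid.closure (circuitWeights A),
          n = m + ℓ ∧ walkWeight A n p = walkWeight A m q + s := by
  induction n generalizing p with
  | zero =>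
    refine ⟨0, p, rfl, rfl, fun k hk k' hk' _ => ?_, 0, zero_mem _, 0, zero_mem _, rfl, by simp⟩
    exact (Nat.le_zero.1 hk).trans (Nat.le_zero.1 hk').symm
  | succ n ih =>
    rw [walkWeight_succ] at hp ⊢
    obtain ⟨m, q, hq0, hqm, hinj, ℓ, hℓ, s, hs, rfl, hw⟩ := ih _ (WithBot.add_ne_bot.1 hp).2
    have hcons : A (p 0) (p 1) + walkWeight A m q = walkWeight A (m + 1) (consWalk (p 0) q) := by
      rw [walkWeight_succ, ← hq0]
      rfl
    rw [hw, ← add_assoc, hcons] at hp ⊢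
    -- Prepend `p 0` to the path of the tail; if `p 0` already lies on that path, at position
    -- `t`, the first `t + 1` steps close an elementary circuit and the path resumes at `t`.
    by_cases hvisit : ∀ k ≤ m, q k ≠ p 0
    · refine ⟨m + 1, consWalk (p 0) q, rfl, hqm, ?_, ℓ, hℓ, s, hs, by omega, rfl⟩
      refine (injOn_consWalk (hinj.mono fun k hk => Nat.lt_succ_iff.1 hk)
        fun k hk => hvisit k (Nat.lt_succ_iff.1 hk)).mono fun k hk => ?_
      simp only [Set.mem_Iic, Set.mem_Iio] at hk ⊢
      omega
    obtain ⟨t, htm, ht⟩ : ∃ t ≤ m, q t = p 0 := by simpa using hvisit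
    obtain ⟨hcirc, hsplit⟩ := walkWeight_consWalk_eq_circuitWeight_add hinj htm ht
      (WithBot.add_ne_bot.1 hp).1
    refine ⟨m - t, fun k => q (k + t), by simpa using ht, by simpa [Nat.sub_add_cancel htm],
      hinj.comp_add_right_Iic htm, t + 1 + ℓ, add_mem (AddSubmonoid.subset_closure ⟨_, hcirc⟩) hℓ,
      _ + s, add_mem (AddSubmonoid.subset_closure ⟨_, _, hcirc, rfl⟩) hs, by omega, ?_⟩
    rw [hsplit, WithBot.coe_add]
    ac_rfl

end Circuits

section Periodicity

variable {d : ℕ} {A : Fin d → Fin d → WithBot ℝ}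

theorem mem_closure_circuitLengths_of_mpPow_ne_bot {n : ℕ} {z : Fin d}
    (h : mpPow A n z z ≠ ⊥) : n ∈ AddSubmonoid.closure (circuitLengths A) := by
  obtain ⟨p, hp0, hpn, hp⟩ := exists_walkWeight_eq_mpPow h
  obtain ⟨m, q, hq0, hqm, hinj, ℓ, hℓ, -, -, rfl, -⟩ := exists_path_add_circuits _ p (hp ▸ h)
  obtain rfl : m = 0 := hinj (Set.mem_Iic.2 le_rfl) (Set.mem_Iic.2 m.zero_le)
    (by rw [hqm, hq0, hp0, hpn])
  simpa using hℓ

theorem exists_mpPow_self_nonneg (hρ : sSup (circuitAvgWeights A) = 0) {n : ℕ} {j : Fin d}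
    (hn : 0 < n) (hj : mpPow A n j j ≠ ⊥) : ∃ g z, 0 < g ∧ 0 ≤ mpPow A g z z := by
  obtain ⟨c, q, hq⟩ : (circuitLengths A).Nonempty := by
    by_contra hempty
    have hmem := mem_closure_circuitLengths_of_mpPow_ne_bot hj
    rw [Set.not_nonempty_iff_eq_empty.1 hempty, AddSubmonoid.closure_empty,
      AddSubmonoid.mem_bot] at hmem
    omega
  have hmem : circuitWeight A c q / c ∈ circuitAvgWeights A := ⟨c, q, hq, rfl⟩
  obtain ⟨c', q', hq', hzero⟩ := hρ ▸ Set.Nonempty.csSup_mem ⟨_, hmem⟩ finite_circuitAvgWeights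
  have hw : circuitWeight A c' q' = 0 :=
    (div_eq_zero_iff.1 hzero.symm).resolve_right (Nat.cast_ne_zero.2 hq'.1.ne')
  exact ⟨c', q' 0, hq'.1, by simpa [hw] using hq'.circuitWeight_le_mpPow⟩

theorem setGcd_closedWalkLengths_dvd (hreach : ∀ i j : Fin d, ∃ n, mpPow A n i j ≠ ⊥)
    (z : Fin d) {ℓ : ℕ} (hℓ : ℓ ∈ AddSubmonoid.closure (circuitLengths A)) :
    Nat.setGcd (closedWalkLengths A z) ∣ ℓ := by
  refine dvd_trans (Nat.dvd_setGcd_iff.2 fun c hc => ?_) (Nat.setGcd_dvd_of_mem_closure hℓ)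
  obtain ⟨q, hq⟩ := hc
  obtain ⟨e, he⟩ := hreach z (q 0)
  obtain ⟨f, hf⟩ := hreach (q 0) z
  have hloop : mpPow A c (q 0) (q 0) ≠ ⊥ :=
    ne_bot_of_le_ne_bot WithBot.coe_ne_bot hq.circuitWeight_le_mpPow
  have hback : e + f ∈ closedWalkLengths A z := mpPow_add_ne_bot he hf
  have hround : e + c + f ∈ closedWalkLengths A z :=
    mpPow_add_ne_bot (mpPow_add_ne_bot he hloop) hf
  rw [add_right_comm] at hround
  exact (Nat.dvd_add_right (Nat.setGcd_dvd_of_mem hback)).1 (Nat.setGcd_dvd_of_mem hround)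

theorem exists_lowerBound_mpPow_self
    (hconn : ∀ i j : Fin d, ∃ n : ℕ, 0 < n ∧ mpPow A n i j ≠ ⊥)
    (hρ : sSup (circuitAvgWeights A) = 0) (j : Fin d) :
    ∃ (K : ℝ) (N : ℕ), ∀ ℓ ∈ AddSubmonoid.closure (circuitLengths A), N ≤ ℓ →
      (K : WithBot ℝ) ≤ mpPow A ℓ j j := by
  have hreach (i j : Fin d) : ∃ n, mpPow A n i j ≠ ⊥ := (hconn i j).imp fun _ => And.right
  obtain ⟨n, hn, hj⟩ := hconn j j
  obtain ⟨g, z, hg, hz⟩ := exists_mpPow_self_nonneg hρ hn hj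
  obtain ⟨K, N₁, hK⟩ := exists_lowerBound_of_superadditive (f := fun n => mpPow A n z z)
    (fun a b => mpPow_add_le a b z z z) (by simp [mpPow]) hg hz
  obtain ⟨N₂, hN₂⟩ := Nat.exists_mem_closure_of_ge (closedWalkLengths A z)
  rw [AddSubmonoid.closure_eq] at hN₂
  obtain ⟨e, he⟩ := hreach j z
  obtain ⟨f, hf⟩ := hreach z j
  obtain ⟨a, ha⟩ := WithBot.ne_bot_iff_exists.1 he
  obtain ⟨b, hb⟩ := WithBot.ne_bot_iff_exists.1 hf
  -- Go from `j` to `z`, stay on a closed walk of bounded weight at `z`, and come back; Schur's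
  -- theorem makes the remaining length `ℓ - (e + f)` a closed-walk length at `z`.
  refine ⟨a + K + b, e + f + N₁ + N₂, fun ℓ hℓ hN => ?_⟩
  have hmid : ℓ - (e + f) ∈ closedWalkLengths A z := by
    refine hN₂ _ (by omega) (Nat.dvd_sub (setGcd_closedWalkLengths_dvd hreach z hℓ) ?_)
    exact Nat.setGcd_dvd_of_mem (add_comm f e ▸ mpPow_add_ne_bot hf he)
  calc ((a + K + b : ℝ) : WithBot ℝ)
      = mpPow A e j z + K + mpPow A f z j := by simp [← ha, ← hb]
    _ ≤ mpPow A e j z + mpPow A (ℓ - (e + f)) z z + mpPow A f z j := by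
      gcongr
      exact hK _ (by omega) hmid
    _ ≤ mpPow A (e + (ℓ - (e + f)) + f) j j :=
      (add_le_add_left (mpPow_add_le _ _ _ _ _) _).trans (mpPow_add_le _ _ _ _ _)
    _ = mpPow A ℓ j j := by congr 1; omega

theorem exists_finite_eventually_mpPow_mem
    (hconn : ∀ i j : Fin d, ∃ n : ℕ, 0 < n ∧ mpPow A n i j ≠ ⊥)
    (hρ : sSup (circuitAvgWeights A) = 0) (i j : Fin d) :
    ∃ V : Set (WithBot ℝ), V.Finite ∧ ∀ᶠ n in Filter.atTop, mpPow A n i j ∈ V := by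
  obtain ⟨K, N, hK⟩ := exists_lowerBound_mpPow_self hconn hρ j
  have hpaths : (⋃ m ∈ Set.Iio d, Set.range (walkWeight A m)).Finite :=
    (Set.finite_Iio d).biUnion fun m _ => finite_range_walkWeight m
  have hcircuits : ((AddSubmonoid.closure (circuitWeights A) : Set ℝ) ∩ Set.Ici K).Finite :=
    finite_closure_inter_Ici (finite_setOf_isElemCircuit _)
      (fun _ ⟨_, _, hq, hw⟩ => hw ▸ circuitWeight_nonpos hρ hq) K
  refine ⟨insert ⊥ (Set.image2 (· + ·) _ ((↑) '' _)),
    (hpaths.image2 _ (hcircuits.image _)).insert ⊥,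
    Filter.eventually_atTop.2 ⟨N + d, fun n hn => ?_⟩⟩
  by_cases hbot : mpPow A n i j = ⊥
  · exact Or.inl hbot
  obtain ⟨p, rfl, rfl, hp⟩ := exists_walkWeight_eq_mpPow hbot
  obtain ⟨m, q, hq0, hqm, hinj, ℓ, hℓ, s, hs, rfl, hw⟩ :=
    exists_path_add_circuits _ p (hp ▸ hbot)
  have hm : m < d := by simpa using lt_card_of_injOn_Iic hinj
  rw [← hp, hw] at hbot ⊢
  have hq : walkWeight A m q ≠ ⊥ := (WithBot.add_ne_bot.1 hbot).1
  have hsK : (K : WithBot ℝ) ≤ s := by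
    rw [← WithBot.add_le_add_iff_left hq, ← hw, hp]
    calc walkWeight A m q + K
        ≤ mpPow A m (p 0) (p (m + ℓ)) + mpPow A ℓ (p (m + ℓ)) (p (m + ℓ)) := by
          gcongr
          · simpa [hq0, hqm] using walkWeight_le_mpPow m q
          · exact hK ℓ hℓ (by omega)
      _ ≤ _ := mpPow_add_le _ _ _ _ _
  exact Or.inr ⟨_, Set.mem_biUnion hm ⟨q, rfl⟩, s, ⟨s, ⟨hs, WithBot.coe_le_coe.1 hsK⟩, rfl⟩, rfl⟩

end Periodicity

theorem mpPow_ultimately_periodic_general {d : ℕ}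
    (A : Fin d → Fin d → WithBot ℝ)
    (hconn : ∀ i j : Fin d, ∃ n : ℕ, 0 < n ∧ mpPow A n i j ≠ ⊥)
    (hρ : sSup (circuitAvgWeights A) = 0) :
    ∃ (n₀ c : ℕ), 1 ≤ c ∧ ∀ n : ℕ, n₀ ≤ n → mpPow A (n + c) = mpPow A n := by
  choose V hVfin hV using exists_finite_eventually_mpPow_mem hconn hρ
  obtain ⟨n₀, c, hc, hper⟩ := Function.exists_iterate_add_eq_of_eventually_mem
    (Set.Finite.pi fun i => Set.Finite.pi (hVfin i)) (x := mpPow A 0) (f := mpMul A) <| by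
      filter_upwards [Filter.eventually_all.2 fun i => Filter.eventually_all.2 (hV i)] with n hn
      simpa only [← mpPow_eq_iterate, Set.mem_univ_pi] using hn
  exact ⟨n₀, c, hc, fun n hn => by simpa only [← mpPow_eq_iterate] using hper n hn⟩

/-- Cyclicity theorem (Cohen–Dubois–Quadrat–Viot): if the graph of `A` is strongly
connected (every node reaches every other by a finite-weight path of positive length)
and `ρ_max(A) = 0`, then the sequence of `(max,+)` powers of `A` is ultimately
periodic. -/
theorem mpPow_ultimately_periodic {d : ℕ} (hd : 0 < d)
    (A : Fin d → Fin d → WithBot ℝ)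
    (hconn : ∀ i j : Fin d, ∃ n : ℕ, 0 < n ∧ mpPow A n i j ≠ ⊥)
    (hρ : sSup (circuitAvgWeights A) = 0) :
    ∃ (n₀ c : ℕ), 1 ≤ c ∧ ∀ n : ℕ, n₀ ≤ n → mpPow A (n + c) = mpPow A n :=
  mpPow_ultimately_periodic_general A hconn hρ
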